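/- arXiv:1706.07281 — 3 statements merged into one kernel-verified Lean document; each statement's English description precedes it below -/
import Mathlib

section
/- Let n ≥ 2 and let A be a nonempty open subset of ℝⁿ. If there exist finitely many points p₁, …, p_k in ℝⁿ such that A ∪ {p₁, …, p_k} is closed, then the closure of A is all of ℝⁿ. -/
/-! The complement of finitely many points in `ℝⁿ`, `n ≥ 2`, is connected and dense. The open set
`A` and the open set `(closure A)ᶜ` cover it, since the only points of `closure A` outside `A` are
among the `pᵢ`; both meet it, as soon as `(closure A)ᶜ` is nonempty, so by connectedness they
intersect, which is absurd. -/

open Set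

theorem dense_of_isClosed_union_of_isPreconnected_compl {X : Type*} [TopologicalSpace X]
    {A P : Set X} (hPconn : IsPreconnected Pᶜ) (hPdense : Dense Pᶜ) (hA : IsOpen A)
    (hne : A.Nonempty) (hclosed : IsClosed (A ∪ P)) : Dense A := by
  rw [dense_iff_closure_eq, ← nonempty_compl.not_left]
  intro hV
  have hcover : Pᶜ ⊆ A ∪ (closure A)ᶜ := fun x hxP => by
    by_cases hx : x ∈ closure A
    · exact .inl ((closure_minimal subset_union_left hclosed hx).resolve_right hxP)
    · exact .inr hx
  have hmeetA : (Pᶜ ∩ A).Nonempty := inter_comm A _ ▸ hPdense.inter_open_nonempty A hA hne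
  have hmeetV : (Pᶜ ∩ (closure A)ᶜ).Nonempty :=
    inter_comm _ Pᶜ ▸ hPdense.inter_open_nonempty _ isClosed_closure.isOpen_compl hV
  obtain ⟨x, -, hxA, hxV⟩ :=
    hPconn A _ hA isClosed_closure.isOpen_compl hcover hmeetA hmeetV
  exact hxV (subset_closure hxA)

theorem Set.Countable.dense_of_isClosed_union {E : Type*} [AddCommGroup E] [Module ℝ E]
    [TopologicalSpace E] [ContinuousAdd E] [ContinuousSMul ℝ E]
    (hrank : 1 < Module.rank ℝ E) {A P : Set E} (hP : P.Countable) (hA : IsOpen A)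
    (hne : A.Nonempty) (hclosed : IsClosed (A ∪ P)) : Dense A :=
  have : Nontrivial E := rank_pos_iff_nontrivial.mp (zero_lt_one.trans hrank)
  dense_of_isClosed_union_of_isPreconnected_compl
    (hP.isConnected_compl_of_one_lt_rank hrank).isPreconnected (hP.dense_compl ℝ) hA hne hclosed

theorem stmt_0 (n : ℕ) (hn : 2 ≤ n) (A : Set (EuclideanSpace ℝ (Fin n)))
    (hne : A.Nonempty) (hA : IsOpen A) (P : Finset (EuclideanSpace ℝ (Fin n)))
    (hclosed : IsClosed (A ∪ (P : Set (EuclideanSpace ℝ (Fin n))))) :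
    closure A = Set.univ := by
  have hrank : 1 < Module.rank ℝ (EuclideanSpace ℝ (Fin n)) := by
    rw [← Module.finrank_eq_rank, finrank_euclideanSpace_fin]
    exact_mod_cast hn
  exact (P.countable_toSet.dense_of_isClosed_union hrank hA hne hclosed).closure_eq
end

section
/- Let n ≥ 2, let A ⊆ ℝⁿ be open, let b ∉ closure(A) and a ∈ A. Then for any k, one can find k+1 distinct points x₁, …, x_{k+1} in A such that the segments [b, xᵢ] pairwise intersect only at b, and each segment [b, xᵢ] contains a boundary point of A. Consequently, if A is nonempty and open and closure(A) ≠ ℝⁿ, then the boundary of A is infinite. -/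
/-!
Pick `u` linearly independent of `a - b` (possible as `n ≥ 2`). The points `a + t • u` with `t`
small lie in the open set `A`, and for distinct `t` the directions `a + t • u - b` are linearly
independent, so the segments from `b` to these points meet only at `b`. Each such segment is
connected and joins `b ∉ A` to a point of `A`, hence meets the frontier of `A`; since
`b ∉ closure A` these frontier points differ from `b` and are therefore pairwise distinct.
-/

open Set Function Topology

theorem IsPreconnected.inter_frontier_nonempty {X : Type*} [TopologicalSpace X] {s t : Set X}
    (hs : IsPreconnected s) (hst : (s ∩ t).Nonempty) (hsdt : (s \ t).Nonempty) :
    (s ∩ frontier t).Nonempty := by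
  by_contra h
  have hsub : s ⊆ interior t ∪ (closure t)ᶜ := fun z hz => by
    by_cases hzi : z ∈ interior t
    · exact .inl hzi
    · exact .inr fun hzc => h ⟨z, hz, hzc, hzi⟩
  obtain ⟨p, hps, hpt⟩ := hst
  obtain ⟨q, hqs, hqt⟩ := hsdt
  obtain ⟨z, -, hzi, hzc⟩ := hs _ _ isOpen_interior isClosed_closure.isOpen_compl hsub
    ⟨p, hps, (hsub hps).resolve_right (not_not.2 (subset_closure hpt))⟩
    ⟨q, hqs, (hsub hqs).resolve_left fun hqi => hqt (interior_subset hqi)⟩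
  exact hzc (interior_subset_closure hzi)

section Segments

variable {E : Type*} [AddCommGroup E] [Module ℝ E]

theorem segment_inter_segment_eq_singleton {b x y : E}
    (h : LinearIndependent ℝ ![x - b, y - b]) : segment ℝ b x ∩ segment ℝ b y = {b} := by
  refine Subset.antisymm ?_ (singleton_subset_iff.2 ⟨left_mem_segment .., left_mem_segment ..⟩)
  rintro z ⟨hzx, hzy⟩
  rw [segment_eq_image'] at hzx hzy
  obtain ⟨θ, -, rfl⟩ := hzx
  obtain ⟨φ, -, hφ⟩ := hzy
  have hθ : θ = 0 := (LinearIndependent.pair_iff.1 h θ (-φ) (by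
    rw [neg_smul, ← sub_eq_add_neg, sub_eq_zero, ← add_right_inj b]; exact hφ.symm)).1
  simp [hθ]

theorem linearIndependent_pair_add_smul {v u : E} (h : LinearIndependent ℝ ![v, u]) {s t : ℝ}
    (hst : s ≠ t) : LinearIndependent ℝ ![v + s • u, v + t • u] := by
  rw [LinearIndependent.pair_iff] at h ⊢
  intro α β hαβ
  obtain ⟨hsum, hlin⟩ := h (α + β) (α * s + β * t) (by rw [← hαβ]; module)
  have hα : α * (s - t) = 0 := by linear_combination hlin - t * hsum
  have hα0 : α = 0 := (mul_eq_zero.1 hα).resolve_right (sub_ne_zero.2 hst)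
  exact ⟨hα0, by linear_combination hsum - hα0⟩

end Segments

theorem exists_seq_mem_pairwise_segment_inter_eq_singleton {E : Type*} [NormedAddCommGroup E]
    [NormedSpace ℝ E] (hE : 1 < Module.rank ℝ E) {A : Set E} (hA : IsOpen A) {a b : E}
    (ha : a ∈ A) (hab : a ≠ b) :
    ∃ x : ℕ → E, Injective x ∧ (∀ m, x m ∈ A) ∧
      Pairwise fun i j => segment ℝ b (x i) ∩ segment ℝ b (x j) = {b} := by
  obtain ⟨u, hu⟩ := exists_linearIndependent_pair_of_one_lt_rank hE (sub_ne_zero.2 hab)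
  have hline : {t : ℝ | a + t • u ∈ A} ∈ 𝓝 0 :=
    (Continuous.tendsto (by fun_prop) 0).eventually (hA.mem_nhds (by simpa using ha))
  let t := (infinite_of_mem_nhds 0 hline).natEmbedding
  have hindep {i j : ℕ} (hij : i ≠ j) :
      LinearIndependent ℝ ![a + (t i : ℝ) • u - b, a + (t j : ℝ) • u - b] := by
    simpa only [add_sub_right_comm] using
      linearIndependent_pair_add_smul hu (Subtype.coe_injective.ne (t.injective.ne hij))
  have hu0 : u ≠ 0 := by simpa using hu.ne_zero 1
  exact ⟨fun m => a + (t m : ℝ) • u,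
    fun i j hij => t.injective <| Subtype.coe_injective <|
      smul_left_injective ℝ hu0 (add_left_cancel hij),
    fun m => (t m).2, fun i j hij => segment_inter_segment_eq_singleton (hindep hij)⟩

section Frontier

variable {E : Type*} [TopologicalSpace E] [AddCommGroup E] [Module ℝ E] [ContinuousAdd E]
  [ContinuousSMul ℝ E] {A : Set E} {b x : E}

theorem exists_mem_segment_mem_frontier (hx : x ∈ A) (hb : b ∉ A) :
    ∃ y ∈ segment ℝ b x, y ∈ frontier A :=
  (convex_segment b x).isPreconnected.inter_frontier_nonempty ⟨x, right_mem_segment .., hx⟩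
    ⟨b, left_mem_segment .., hb⟩

theorem frontier_infinite_of_pairwise_segment_inter_eq_singleton {ι : Type*} [Infinite ι]
    {x : ι → E} (hx : ∀ i, x i ∈ A) (hb : b ∉ closure A)
    (hseg : Pairwise fun i j => segment ℝ b (x i) ∩ segment ℝ b (x j) = {b}) :
    (frontier A).Infinite := by
  choose y hy hyA using fun i =>
    exists_mem_segment_mem_frontier (hx i) fun hbA => hb (subset_closure hbA)
  refine infinite_of_injective_forall_mem (fun i j hyij => ?_) hyA
  by_contra hij
  have hyb : y i ∈ segment ℝ b (x i) ∩ segment ℝ b (x j) := ⟨hy i, hyij ▸ hy j⟩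
  rw [hseg hij, mem_singleton_iff] at hyb
  exact hb (hyb ▸ frontier_subset_closure (hyA i))

end Frontier

theorem stmt_2 (n : ℕ) (hn : 2 ≤ n) (A : Set (EuclideanSpace ℝ (Fin n)))
    (hA : IsOpen A) (a b : EuclideanSpace ℝ (Fin n)) (ha : a ∈ A)
    (hb : b ∉ closure A) :
    (∀ k : ℕ, ∃ x : Fin (k + 1) → EuclideanSpace ℝ (Fin n),
      Function.Injective x ∧ (∀ i, x i ∈ A) ∧
      (∀ i j, i ≠ j → segment ℝ b (x i) ∩ segment ℝ b (x j) = {b}) ∧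
      (∀ i, ∃ y ∈ segment ℝ b (x i), y ∈ frontier A)) ∧
    (frontier A).Infinite := by
  have hrank : 1 < Module.rank ℝ (EuclideanSpace ℝ (Fin n)) :=
    Module.one_lt_rank_of_one_lt_finrank (by rw [finrank_euclideanSpace_fin]; omega)
  have hbA : b ∉ A := fun hbA => hb (subset_closure hbA)
  have hab : a ≠ b := fun hab => hbA (hab ▸ ha)
  obtain ⟨x, hxinj, hxA, hseg⟩ :=
    exists_seq_mem_pairwise_segment_inter_eq_singleton hrank hA ha hab
  exact ⟨fun k => ⟨x ∘ Fin.val, hxinj.comp Fin.val_injective, fun i => hxA i,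
      fun i j hij => hseg (Fin.val_injective.ne hij),
      fun i => exists_mem_segment_mem_frontier (hxA i) hbA⟩,
    frontier_infinite_of_pairwise_segment_inter_eq_singleton hxA hb hseg⟩
end

section
/- Let f : ℝⁿ → ℝⁿ be a C¹ map with n ≥ 2 such that det Df(x) ≠ 0 for every x ∈ ℝⁿ, and such that |f(x)| → ∞ as |x| → ∞. Then f is surjective. -/
/-!
By the inverse function theorem, a C¹ map with everywhere invertible derivative is open.
Coercivity says that preimages of bounded sets are bounded, so `f` is proper and in particular
closed. Hence the range of `f` is a nonempty clopen subset of the connected space `ℝⁿ`.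
-/

open Filter

theorem IsOpenMap.surjective_of_isClosedMap {X Y : Type*} [TopologicalSpace X] [Nonempty X]
    [TopologicalSpace Y] [PreconnectedSpace Y] {f : X → Y} (hopen : IsOpenMap f)
    (hclosed : IsClosedMap f) : Function.Surjective f :=
  Set.range_eq_univ.mp <|
    IsClopen.eq_univ ⟨hclosed.isClosed_range, hopen.isOpen_range⟩ (Set.range_nonempty f)

theorem ContDiff.isOpenMap_of_det_fderiv_ne_zero {E : Type*} [NormedAddCommGroup E]
    [NormedSpace ℝ E] [FiniteDimensional ℝ E] {f : E → E} (hf : ContDiff ℝ 1 f)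
    (hdet : ∀ x, (fderiv ℝ f x).det ≠ 0) : IsOpenMap f :=
  isOpenMap_of_hasStrictFDerivAt_equiv
    (f' := fun x => (fderiv ℝ f x).toContinuousLinearEquivOfDetNeZero (hdet x)) fun x => by
      simpa using hf.contDiffAt.hasStrictFDerivAt one_ne_zero

theorem Continuous.isProperMap_of_tendsto_norm_cocompact {X F : Type*} [TopologicalSpace X]
    [NormedAddCommGroup F] [ProperSpace F] {f : X → F} (hf : Continuous f)
    (hcoercive : Tendsto (‖f ·‖) (cocompact X) atTop) : IsProperMap f := by
  rw [isProperMap_iff_tendsto_cocompact, ← Metric.cobounded_eq_cocompact]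
  exact ⟨hf, tendsto_norm_atTop_iff_cobounded.mp hcoercive⟩

theorem stmt_4_general (n : ℕ)
    (f : EuclideanSpace ℝ (Fin n) → EuclideanSpace ℝ (Fin n))
    (hf : ContDiff ℝ 1 f)
    (hdet : ∀ x, (fderiv ℝ f x).det ≠ 0)
    (hcoercive : Filter.Tendsto (fun x => ‖f x‖) (Filter.cocompact _) Filter.atTop) :
    Function.Surjective f :=
  (hf.isOpenMap_of_det_fderiv_ne_zero hdet).surjective_of_isClosedMap
    (hf.continuous.isProperMap_of_tendsto_norm_cocompact hcoercive).isClosedMap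

theorem stmt_4 (n : ℕ) (hn : 2 ≤ n)
    (f : EuclideanSpace ℝ (Fin n) → EuclideanSpace ℝ (Fin n))
    (hf : ContDiff ℝ 1 f)
    (hdet : ∀ x, (fderiv ℝ f x).det ≠ 0)
    (hcoercive : Filter.Tendsto (fun x => ‖f x‖) (Filter.cocompact _) Filter.atTop) :
    Function.Surjective f :=
  stmt_4_general n f hf hdet hcoercive
end
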